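/- arXiv:0904.4413 — 5 statements merged into one kernel-verified Lean document; each statement's English description precedes it below -/
import Mathlib

section
/- Let R be a commutative ring with unity, n > 0, and let d_1 = n > d_2 > ... > d_h be integers with d_{i+1} | d_i for all i, setting e_i = d_i/d_{i+1} for i < h and e_h = +∞. For each i let g_i be a monic polynomial of R[y] of degree n/d_i. Then every monic polynomial f of degree n in R[y] can be uniquely written as f = Σ_{θ ∈ B} a_θ g_1^{θ_1}···g_h^{θ_h} with a_θ ∈ R, where B = {θ ∈ ℕ^h : θ_i < e_i for all i}. -/
/-!
Since `n / d i = e 0 * ⋯ * e (i - 1)` with `e j = d j / d (j + 1)`, the degree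
`∑ θ i * (n / d i)` of `∏ g i ^ θ i` is the mixed-radix value of `θ` with radices `e j`, the
last digit being unbounded; hence it maps the admissible exponents `B` bijectively onto `ℕ`.
So the `∏ g i ^ θ i` with `θ ∈ B` are monic polynomials with exactly one of each degree, and
such a family is a basis of `R[X]`: existence by subtracting leading terms, uniqueness by
comparing the coefficient of top degree.
-/

open Polynomial

namespace Polynomial

variable {R ι : Type*} [CommRing R] {Q : ι → R[X]} {S : Set ι}

theorem eq_zero_of_sum_C_mul_eq_zero (hQ : ∀ i ∈ S, (Q i).Monic)
    (hinj : Set.InjOn (fun i => (Q i).natDegree) S) {a : ι →₀ R} (haS : ↑a.support ⊆ S)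
    (hsum : (a.sum fun i c => C c * Q i) = 0) : a = 0 := by
  by_contra hne
  obtain ⟨i, hi, hmax⟩ := a.support.exists_max_image (fun i => (Q i).natDegree)
    (Finsupp.support_nonempty_iff.mpr hne)
  have hcoeff : (a.sum fun i c => C c * Q i).coeff (Q i).natDegree = a i := by
    rw [Finsupp.sum, finsetSum_coeff, Finset.sum_eq_single i]
    · rw [coeff_C_mul, (hQ i (haS hi)).coeff_natDegree, mul_one]
    · intro j hj hji
      have hlt : (Q j).natDegree < (Q i).natDegree :=
        (hmax j hj).lt_of_ne fun h => hji (hinj (haS hj) (haS hi) h)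
      rw [coeff_C_mul, coeff_eq_zero_of_natDegree_lt hlt, mul_zero]
    · exact fun h => absurd hi h
  exact Finsupp.mem_support_iff.mp hi (hsum ▸ hcoeff).symm

theorem exists_sum_C_mul_eq (hQ : ∀ i ∈ S, (Q i).Monic)
    (hsurj : Set.SurjOn (fun i => (Q i).natDegree) S Set.univ) (f : R[X]) :
    ∃ a : ι →₀ R, ↑a.support ⊆ S ∧ f = a.sum fun i c => C c * Q i := by
  induction hN : f.natDegree using Nat.strong_induction_on generalizing f with
  | _ N ih =>
  by_cases hf : f = 0
  · exact ⟨0, by simp, by simp [hf]⟩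
  obtain ⟨i, hiS, hi⟩ := hsurj (Set.mem_univ f.natDegree)
  have hQi := hQ i hiS
  set f' := f - C f.leadingCoeff * Q i with hf'
  obtain ⟨a, haS, ha⟩ : ∃ a : ι →₀ R, ↑a.support ⊆ S ∧ f' = a.sum fun i c => C c * Q i := by
    by_cases hf'0 : f' = 0
    · exact ⟨0, by simp, by simp [hf'0]⟩
    have : Nontrivial R := nontrivial_iff.mp (nontrivial_of_ne f 0 hf)
    have hdeg : f.degree = (C f.leadingCoeff * Q i).degree := by
      rw [degree_C_mul_of_mul_ne_zero (by simpa [hQi.leadingCoeff] using hf),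
        degree_eq_natDegree hQi.ne_zero, degree_eq_natDegree hf, ← hi]
    have hlead : f.leadingCoeff = (C f.leadingCoeff * Q i).leadingCoeff := by
      rw [leadingCoeff_mul_monic hQi, leadingCoeff_C]
    exact ih _ (hN ▸ natDegree_lt_natDegree hf'0 (degree_sub_lt_left hdeg hf hlead)) f' rfl
  refine ⟨a + Finsupp.single i f.leadingCoeff, ?_, ?_⟩
  · classical
    refine (Finset.coe_subset.mpr Finsupp.support_add).trans ?_
    rw [Finset.coe_union, Set.union_subset_iff]
    exact ⟨haS, (Finset.coe_subset.mpr Finsupp.support_single_subset).trans (by simpa using hiS)⟩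
  · rw [Finsupp.sum_add_index' (by simp) (by simp [add_mul]), Finsupp.sum_single_index (by simp),
      ← ha, hf', sub_add_cancel]

theorem existsUnique_sum_C_mul_eq (hQ : ∀ i ∈ S, (Q i).Monic)
    (hbij : Set.BijOn (fun i => (Q i).natDegree) S Set.univ) (f : R[X]) :
    ∃! a : ι →₀ R, ↑a.support ⊆ S ∧ f = a.sum fun i c => C c * Q i := by
  classical
  obtain ⟨a, haS, ha⟩ := exists_sum_C_mul_eq hQ hbij.surjOn f
  refine ⟨a, ⟨haS, ha⟩, fun b ⟨hbS, hb⟩ => sub_eq_zero.mp ?_⟩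
  refine eq_zero_of_sum_C_mul_eq_zero hQ hbij.injOn ?_ ?_
  · refine (Finset.coe_subset.mpr Finsupp.support_sub).trans ?_
    rw [Finset.coe_union]
    exact Set.union_subset hbS haS
  · rw [Finsupp.sum_sub_index (by simp [sub_mul]), ← ha, ← hb, sub_self]

end Polynomial

namespace Nat

def mixedRadixValue {h : ℕ} (E : ℕ → ℕ) (θ : Fin h → ℕ) : ℕ :=
  ∑ i, θ i * ∏ j ∈ Finset.range i, E j

theorem mixedRadixValue_eq_add_mul_tail {m : ℕ} (E : ℕ → ℕ) (θ : Fin (m + 1) → ℕ) :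
    mixedRadixValue E θ = θ 0 + E 0 * mixedRadixValue (fun j => E (j + 1)) (Fin.tail θ) := by
  simp only [mixedRadixValue, Fin.sum_univ_succ, Fin.tail, Fin.val_zero, Fin.val_succ,
    Finset.prod_range_succ', Finset.range_zero, Finset.prod_empty, mul_one, Finset.mul_sum]
  congr 1
  exact Finset.sum_congr rfl fun i _ => by ring

theorem bijOn_mixedRadixValue {h : ℕ} (hh : 0 < h) {E : ℕ → ℕ}
    (hE : ∀ i, i + 1 < h → 0 < E i) :
    Set.BijOn (mixedRadixValue E) {θ : Fin h → ℕ | ∀ i : Fin h, (i : ℕ) + 1 < h → θ i < E i}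
      Set.univ := by
  obtain ⟨m, rfl⟩ : ∃ m, h = m + 1 := ⟨h - 1, by omega⟩
  induction m generalizing E with
  | zero =>
    refine ⟨fun _ _ => trivial, fun θ _ θ' _ hθ => ?_, fun k _ => ⟨fun _ => k, by simp, ?_⟩⟩
    · funext i
      simpa [mixedRadixValue, Fin.fin_one_eq_zero i] using hθ
    · simp [mixedRadixValue]
  | succ m ih =>
    have ih' := ih (E := fun j => E (j + 1)) (by omega) fun i hi => hE (i + 1) (by omega)
    have hE0 := hE 0 (by omega)
    refine ⟨fun _ _ => trivial, fun θ hθ θ' hθ' hval => ?_, fun k _ => ?_⟩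
    · rw [mixedRadixValue_eq_add_mul_tail E θ, mixedRadixValue_eq_add_mul_tail E θ'] at hval
      have hθ0 : θ 0 < E 0 := hθ 0 (by simp)
      have hθ'0 : θ' 0 < E 0 := hθ' 0 (by simp)
      have h0 : θ 0 = θ' 0 := by
        have hmod := congrArg (· % E 0) hval
        simp only [Nat.add_mul_mod_self_left] at hmod
        rwa [Nat.mod_eq_of_lt hθ0, Nat.mod_eq_of_lt hθ'0] at hmod
      have hrest : mixedRadixValue (fun j => E (j + 1)) (Fin.tail θ)
          = mixedRadixValue (fun j => E (j + 1)) (Fin.tail θ') :=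
        Nat.eq_of_mul_eq_mul_left hE0 (by omega)
      have htail : Fin.tail θ = Fin.tail θ' :=
        ih'.injOn (fun i hi => hθ i.succ (by simpa using hi))
          (fun i hi => hθ' i.succ (by simpa using hi)) hrest
      rw [← Fin.cons_self_tail θ, ← Fin.cons_self_tail θ', h0, htail]
    · obtain ⟨t, ht, htk⟩ := ih'.surjOn (Set.mem_univ (k / E 0))
      refine ⟨Fin.cons (k % E 0) t, fun i hi => ?_, ?_⟩
      · cases i using Fin.cases with
        | zero => exact Nat.mod_lt _ hE0
        | succ i => simpa using ht i (by simpa using hi)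
      · rw [mixedRadixValue_eq_add_mul_tail, Fin.cons_zero, Fin.tail_cons, htk]
        exact Nat.mod_add_div k (E 0)

theorem mul_prod_range_div_eq {d : ℕ → ℕ} {i : ℕ} (hdvd : ∀ j < i, d (j + 1) ∣ d j) :
    d i * ∏ j ∈ Finset.range i, d j / d (j + 1) = d 0 := by
  induction i with
  | zero => simp
  | succ i ih =>
    rw [Finset.prod_range_succ, mul_comm (∏ j ∈ Finset.range i, _), ← mul_assoc,
      Nat.mul_div_cancel' (hdvd i i.lt_succ_self), ih fun j hj => hdvd j (by omega)]

end Nat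

theorem G_adic_expansion_general {R : Type*} [CommRing R] (n h : ℕ) (hn : 0 < n) (hh : 0 < h)
    (d : ℕ → ℕ) (hd0 : d 0 = n)
    (hdvd : ∀ i, i + 1 < h → d (i + 1) ∣ d i)
    (g : Fin h → R[X]) (hg : ∀ i, (g i).Monic)
    (hgdeg : ∀ i : Fin h, (g i).natDegree = n / d i)
    (f : R[X]) :
    ∃! a : (Fin h → ℕ) →₀ R,
      (∀ θ ∈ a.support, ∀ i : Fin h, (i : ℕ) + 1 < h → θ i < d i / d ((i : ℕ) + 1)) ∧
      f = a.sum fun θ c => C c * ∏ i : Fin h, g i ^ θ i := by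
  set E : ℕ → ℕ := fun j => d j / d (j + 1)
  have htelescope : ∀ i < h, d i * ∏ j ∈ Finset.range i, E j = n := fun i hi =>
    hd0 ▸ Nat.mul_prod_range_div_eq fun j hj => hdvd j (by omega)
  have hweight : ∀ i < h, n / d i = ∏ j ∈ Finset.range i, E j := fun i hi =>
    (Nat.eq_div_of_mul_eq_right (left_ne_zero_of_mul (htelescope i hi ▸ hn.ne'))
      (htelescope i hi)).symm
  have hE : ∀ i, i + 1 < h → 0 < E i := fun i hi =>
    Nat.pos_of_ne_zero <| Finset.prod_ne_zero_iff.mp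
      (right_ne_zero_of_mul (htelescope (i + 1) hi ▸ hn.ne')) i (by simp)
  have hdeg : ∀ θ : Fin h → ℕ, (∏ i, g i ^ θ i).natDegree = Nat.mixedRadixValue E θ := by
    intro θ
    rw [natDegree_prod_of_monic _ _ fun i _ => (hg i).pow _, Nat.mixedRadixValue]
    exact Finset.sum_congr rfl fun i _ => by rw [(hg i).natDegree_pow, hgdeg, hweight i i.isLt]
  exact existsUnique_sum_C_mul_eq (fun θ _ => monic_prod_of_monic _ _ fun i _ => (hg i).pow _)
    ((Nat.bijOn_mixedRadixValue hh hE).congr fun θ _ => (hdeg θ).symm) f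

/-- **G-adic expansion.**  Let `R` be a commutative ring with unity, `n > 0`, and let
`d 0 = n > d 1 > … > d (h-1)` be integers with `d (i+1) ∣ d i`.  For each `i < h` let
`g i` be a monic polynomial of degree `n / d i`.  Then every monic polynomial `f` of
degree `n` can be uniquely written as `f = Σ_{θ ∈ B} a_θ • g_1^{θ_1} ⋯ g_h^{θ_h}`,
with `a_θ ∈ R`, where `B = {θ : θ_i < e_i = d_i / d_{i+1}` for `i < h-1}` (no
constraint on the last component, corresponding to `e_h = +∞`). -/
theorem G_adic_expansion {R : Type*} [CommRing R] (n h : ℕ) (hn : 0 < n) (hh : 0 < h)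
    (d : ℕ → ℕ) (hd0 : d 0 = n)
    (hdesc : ∀ i, i + 1 < h → d (i + 1) < d i)
    (hdvd : ∀ i, i + 1 < h → d (i + 1) ∣ d i)
    (g : Fin h → R[X]) (hg : ∀ i, (g i).Monic)
    (hgdeg : ∀ i : Fin h, (g i).natDegree = n / d i)
    (f : R[X]) (hf : f.Monic) (hfdeg : f.natDegree = n) :
    ∃! a : (Fin h → ℕ) →₀ R,
      (∀ θ ∈ a.support, ∀ i : Fin h, (i : ℕ) + 1 < h → θ i < d i / d ((i : ℕ) + 1)) ∧
      f = a.sum fun θ c => C c * ∏ i : Fin h, g i ^ θ i :=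
  G_adic_expansion_general n h hn hh d hd0 hdvd g hg hgdeg f
end

section
/- Let R be a commutative ring in which d is a unit, f monic of degree n in R[y], d | n, g monic of degree n/d. Then the first coefficient a_1 of the g-adic expansion of f vanishes if and only if deg_y(f - g^d) < n - n/d. -/
/-!
Write `f - g^d = a_1 g^{d-1} + T` with `T = ∑_{i ≥ 2} a_i g^{d-i}`. Since every digit has degree
`< deg g = n/d`, the tail `T` has degree `< (d-1) n/d = n - n/d`, so `deg (f - g^d) < n - n/d` iff
`deg (a_1 g^{d-1}) < (d-1) n/d`. As `g` is monic, `deg (a_1 g^{d-1}) = deg a_1 + (d-1) n/d`,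
which is that small only when `a_1 = 0`.
-/

open Polynomial

namespace Polynomial

variable {R : Type*} [CommRing R]

theorem degree_add_lt_iff_of_degree_lt {p q : R[X]} {N : WithBot ℕ} (hq : q.degree < N) :
    (p + q).degree < N ↔ p.degree < N := by
  refine ⟨fun h => ?_, fun h => (degree_add_le p q).trans_lt (max_lt h hq)⟩
  rw [← add_sub_cancel_right p q]
  exact (degree_sub_le _ _).trans_lt (max_lt h hq)

variable {g : R[X]} {m : ℕ}

theorem Monic.degree_pow_of_natDegree_eq [Nontrivial R] (hg : g.Monic) (hgdeg : g.natDegree = m)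
    (k : ℕ) : (g ^ k).degree = (k * m : ℕ) := by
  rw [degree_eq_natDegree (hg.pow k).ne_zero, hg.natDegree_pow, hgdeg]

theorem Monic.degree_mul_pow_lt_iff (hg : g.Monic) (hgdeg : g.natDegree = m) (b : R[X]) (k : ℕ) :
    (b * g ^ k).degree < (k * m : ℕ) ↔ b = 0 := by
  refine ⟨fun h => ?_, fun hb => ?_⟩
  · by_contra hb
    have : Nontrivial R := nontrivial_iff.mp (nontrivial_of_ne b 0 hb)
    rw [(hg.pow k).degree_mul, hg.degree_pow_of_natDegree_eq hgdeg, degree_eq_natDegree hb,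
      ← Nat.cast_add, Nat.cast_lt] at h
    omega
  · rw [hb, zero_mul, degree_zero]
    exact WithBot.bot_lt_coe _

theorem Monic.degree_mul_pow_lt (hg : g.Monic) (hgdeg : g.natDegree = m) {b : R[X]}
    (hb : b.degree < m) (k : ℕ) : (b * g ^ k).degree < ((k + 1) * m : ℕ) := by
  rcases subsingleton_or_nontrivial R with hR | hR
  · rw [Subsingleton.elim (b * g ^ k) 0, degree_zero]
    exact WithBot.bot_lt_coe _
  rw [(hg.pow k).degree_mul, hg.degree_pow_of_natDegree_eq hgdeg, add_comm k 1, one_add_mul,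
    Nat.cast_add]
  exact WithBot.add_lt_add_right WithBot.coe_ne_bot hb

theorem Monic.degree_sum_mul_pow_lt (hg : g.Monic) (hgdeg : g.natDegree = m) {e : ℕ}
    (b : Fin e → R[X]) (hb : ∀ i, (b i).degree < m) :
    (∑ i : Fin e, b i * g ^ (e - (i + 1))).degree < (e * m : ℕ) := by
  refine (degree_sum_le _ _).trans_lt ((Finset.sup_lt_iff (WithBot.bot_lt_coe _)).2 ?_)
  intro i _
  refine (hg.degree_mul_pow_lt hgdeg (hb i) _).trans_le (Nat.cast_le.2 ?_)
  exact Nat.mul_le_mul_right m (by omega)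

end Polynomial

theorem approximate_root_iff_degree_lt_general {R : Type*} [CommRing R] (n d : ℕ)
    (hd : 0 < d) (hdvd : d ∣ n) (f g : R[X])
    (hg : g.Monic) (hgdeg : g.natDegree = n / d)
    (a : Fin d → R[X])
    (hadeg : ∀ i, (a i).degree < ((n / d : ℕ) : WithBot ℕ))
    (hexp : f = g ^ d + ∑ i : Fin d, a i * g ^ (d - ((i : ℕ) + 1))) :
    a ⟨0, hd⟩ = 0 ↔ (f - g ^ d).degree < ((n - n / d : ℕ) : WithBot ℕ) := by
  obtain ⟨e, rfl⟩ : ∃ e, d = e + 1 := ⟨d - 1, by omega⟩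
  change a 0 = 0 ↔ _
  have hsplit : f - g ^ (e + 1) = a 0 * g ^ e + ∑ i : Fin e, a i.succ * g ^ (e - (i + 1)) := by
    rw [hexp, Fin.sum_univ_succ]
    simp
  have hcodeg : n - n / (e + 1) = e * (n / (e + 1)) := by
    obtain ⟨m, rfl⟩ := hdvd
    rw [Nat.mul_div_cancel_left m (Nat.succ_pos e), add_one_mul, Nat.add_sub_cancel, mul_comm]
  rw [hsplit, hcodeg, degree_add_lt_iff_of_degree_lt
      (hg.degree_sum_mul_pow_lt hgdeg _ fun i => hadeg i.succ),
    hg.degree_mul_pow_lt_iff hgdeg]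

/-- Let `R` be a commutative ring in which `d` is a unit, `f` monic of degree `n`,
`d ∣ n`, `g` monic of degree `n / d`, and let `f = g^d + a_1 g^{d-1} + … + a_d` be the
`g`-adic expansion of `f`.  Then `a_1 = 0` if and only if
`deg_y (f - g^d) < n - n/d`. -/
theorem approximate_root_iff_degree_lt {R : Type*} [CommRing R] (n d : ℕ)
    (hn : 0 < n) (hd : 0 < d) (hdvd : d ∣ n) (hinv : Invertible (d : R)) (f g : R[X])
    (hf : f.Monic) (hfdeg : f.natDegree = n) (hg : g.Monic) (hgdeg : g.natDegree = n / d)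
    (a : Fin d → R[X])
    (hadeg : ∀ i, (a i).degree < ((n / d : ℕ) : WithBot ℕ))
    (hexp : f = g ^ d + ∑ i : Fin d, a i * g ^ (d - ((i : ℕ) + 1))) :
    a ⟨0, hd⟩ = 0 ↔ (f - g ^ d).degree < ((n - n / d : ℕ) : WithBot ℕ) :=
  approximate_root_iff_degree_lt_general n d hd hdvd f g hg hgdeg a hadeg hexp
end

section
/- Let R be a commutative ring containing the rationals (or in which d is invertible), f a monic polynomial of degree n in R[y], and d a positive divisor of n. Then there exists a unique monic polynomial g of degree n/d in R[y] such that deg_y(f - g^d) < n - n/d (the d-th approximate root of f). -/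
/-!
Write the exponent as `d + 1` and `n = (d + 1) * m`. For `g` of degree `m` and `h` of degree
at most `k < m`, the binomial expansion gives `(g + h) ^ (d + 1) = g ^ (d + 1) + (d + 1) g ^ d h`
up to terms of degree `< d * m + k`. Existence is the Tschirnhausen iteration: starting from
`g = X ^ m`, for `k = m - 1, …, 0` add `c X ^ k`, where `(d + 1) c` is the coefficient of
`X ^ (d * m + k)` in `f - g ^ (d + 1)`; this kills that coefficient. Uniqueness: if `g + h` is a
second approximate root with `h ≠ 0`, then `(g + h) ^ (d + 1) - g ^ (d + 1)` has the coefficient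
`(d + 1) * h.leadingCoeff ≠ 0` at `X ^ (d * m + h.natDegree)`, a degree that is too large.
-/

open Polynomial

namespace Polynomial

variable {R : Type*} [CommRing R]

theorem degree_lt_of_natDegree_lt {p : R[X]} {N : ℕ} (h : p.natDegree < N) : p.degree < N :=
  degree_le_natDegree.trans_lt (WithBot.coe_lt_coe.mpr h)

theorem degree_sub_lt_of_coeff_eq {p q : R[X]} {N : ℕ} (hp : p.degree < ↑(N + 1))
    (hq : q.degree < ↑(N + 1)) (h : p.coeff N = q.coeff N) : (p - q).degree < N := by
  rw [degree_lt_iff_coeff_zero] at hp hq ⊢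
  intro j hj
  rcases hj.eq_or_lt with rfl | hlt
  · rw [coeff_sub, h, sub_self]
  · rw [coeff_sub, hp j hlt, hq j hlt, sub_self]

/-- The remaining terms `g ^ i * h ^ (d + 1 - i)`, `i < d`, of the binomial expansion have degree
at most `i * m + (d + 1 - i) * k`, short of `d * m + k` by `(d - i) * (m - k)`. -/
theorem degree_add_pow_succ_sub_lt {g h : R[X]} {d m k : ℕ} (hg : g.natDegree ≤ m)
    (hh : h.natDegree ≤ k) (hk : k < m) :
    ((g + h) ^ (d + 1) - g ^ (d + 1) - C ((d + 1 : ℕ) : R) * g ^ d * h).degree <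
      ↑(d * m + k) := by
  have expand : (g + h) ^ (d + 1) - g ^ (d + 1) - C ((d + 1 : ℕ) : R) * g ^ d * h =
      ∑ i ∈ Finset.range d, g ^ i * h ^ (d + 1 - i) * ((d + 1).choose i : R[X]) := by
    rw [add_pow, Finset.sum_range_succ, Finset.sum_range_succ, Nat.choose_succ_self_right,
      Nat.choose_self, map_natCast, Nat.add_sub_cancel_left, Nat.sub_self]
    ring
  rw [expand, ← mem_degreeLT]
  refine Submodule.sum_mem _ fun i hi => mem_degreeLT.mpr (degree_lt_of_natDegree_lt ?_)
  obtain ⟨j, rfl⟩ : ∃ j, d = i + j + 1 := ⟨d - i - 1, by grind⟩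
  rw [show i + j + 1 + 1 - i = j + 2 by omega]
  refine (natDegree_mul_le_of_le (natDegree_mul_le_of_le (natDegree_pow_le_of_le i hg)
    (natDegree_pow_le_of_le (j + 2) hh)) (natDegree_natCast _).le).trans_lt ?_
  nlinarith

theorem IsMonicOfDegree.exists_degree_sub_pow_lt_of_lt_succ {f g : R[X]} {d m k : ℕ}
    (hd : IsUnit ((d + 1 : ℕ) : R)) (hg : IsMonicOfDegree g m) (hk : k < m)
    (hfg : (f - g ^ (d + 1)).degree < ↑(d * m + k + 1)) :
    ∃ g' : R[X], IsMonicOfDegree g' m ∧ (f - g' ^ (d + 1)).degree < ↑(d * m + k) := by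
  obtain ⟨b, hb⟩ := hd.exists_left_inv
  set c := b * (f - g ^ (d + 1)).coeff (d * m + k)
  set h := C c * X ^ k
  have hh : h.natDegree ≤ k := natDegree_C_mul_X_pow_le c k
  refine ⟨g + h, hg.add_right (hh.trans_lt hk), ?_⟩
  have split : f - (g + h) ^ (d + 1) = (f - g ^ (d + 1) - C ((d + 1 : ℕ) : R) * g ^ d * h) -
      ((g + h) ^ (d + 1) - g ^ (d + 1) - C ((d + 1 : ℕ) : R) * g ^ d * h) := by ring
  rw [split]
  refine (degree_sub_le _ _).trans_lt
    (max_lt ?_ (degree_add_pow_succ_sub_lt hg.natDegree_eq.le hh hk))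
  have linear :
      C ((d + 1 : ℕ) : R) * g ^ d * h = C (((d + 1 : ℕ) : R) * c) * (g ^ d * X ^ k) := by
    simp only [h, C_mul]
    ring
  have hgd : IsMonicOfDegree (g ^ d) (d * m) := mul_comm m d ▸ hg.pow d
  refine degree_sub_lt_of_coeff_eq hfg (degree_lt_of_natDegree_lt ?_) ?_
  · rw [linear]
    calc _ ≤ (g ^ d * X ^ k).natDegree := natDegree_C_mul_le _ _
      _ ≤ d * m + k := natDegree_mul_le_of_le hgd.natDegree_eq.le (natDegree_X_pow_le k)
      _ < d * m + k + 1 := Nat.lt_succ_self _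
  · rw [linear, coeff_C_mul, coeff_mul_X_pow, ← hgd.natDegree_eq, hgd.monic.coeff_natDegree,
      hgd.natDegree_eq, mul_one, ← mul_assoc, mul_comm _ b, hb, one_mul]

theorem IsMonicOfDegree.exists_degree_sub_pow_lt [Nontrivial R] {f : R[X]} {d m : ℕ}
    (hd : IsUnit ((d + 1 : ℕ) : R)) (hf : IsMonicOfDegree f ((d + 1) * m)) :
    ∃ g : R[X], IsMonicOfDegree g m ∧ (f - g ^ (d + 1)).degree < ↑(d * m) := by
  suffices ∀ k ≤ m,
      ∃ g : R[X], IsMonicOfDegree g m ∧ (f - g ^ (d + 1)).degree < ↑(d * m + k) from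
    this 0 (Nat.zero_le m)
  intro k hk
  induction hk using Nat.decreasingInduction with
  | self =>
    refine ⟨X ^ m, isMonicOfDegree_X_pow R m, ?_⟩
    have hX : IsMonicOfDegree (((X : R[X]) ^ m) ^ (d + 1)) ((d + 1) * m) :=
      mul_comm m (d + 1) ▸ (isMonicOfDegree_X_pow R m).pow (d + 1)
    rw [show d * m + m = (d + 1) * m by ring]
    exact degree_sub_lt_of_coeff_eq
      (degree_lt_of_natDegree_lt (hf.natDegree_eq ▸ Nat.lt_succ_self _))
      (degree_lt_of_natDegree_lt (hX.natDegree_eq ▸ Nat.lt_succ_self _)) (hf.coeff_eq hX le_rfl)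
  | of_succ k hk ih =>
    obtain ⟨g, hg, hfg⟩ := ih
    exact hg.exists_degree_sub_pow_lt_of_lt_succ hd hk hfg

theorem IsMonicOfDegree.eq_of_degree_pow_sub_pow_lt {g g' : R[X]} {d m : ℕ}
    (hd : IsUnit ((d + 1 : ℕ) : R)) (hg : IsMonicOfDegree g m) (hg' : IsMonicOfDegree g' m)
    (hlt : (g' ^ (d + 1) - g ^ (d + 1)).degree < ↑(d * m)) : g' = g := by
  rcases eq_or_ne m 0 with rfl | hm
  · rw [isMonicOfDegree_zero_iff] at hg hg'
    rw [hg, hg']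
  rw [← sub_eq_zero, ← leadingCoeff_eq_zero, ← hd.mul_right_eq_zero]
  set h := g' - g
  have hk : h.natDegree < m := hg'.natDegree_sub_lt hm hg
  have hgd : IsMonicOfDegree (g ^ d) (d * m) := mul_comm m d ▸ hg.pow d
  have split : g' ^ (d + 1) - g ^ (d + 1) = C ((d + 1 : ℕ) : R) * (g ^ d * h) +
      ((g + h) ^ (d + 1) - g ^ (d + 1) - C ((d + 1 : ℕ) : R) * g ^ d * h) := by
    simp only [h]
    ring
  have top : (g' ^ (d + 1) - g ^ (d + 1)).coeff (d * m + h.natDegree) = 0 :=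
    coeff_eq_zero_of_degree_lt (hlt.trans_le (by exact_mod_cast Nat.le_add_right _ _))
  rwa [split, coeff_add, coeff_eq_zero_of_degree_lt
    (degree_add_pow_succ_sub_lt hg.natDegree_eq.le le_rfl hk), add_zero, coeff_C_mul,
    ← hgd.natDegree_eq, coeff_mul_degree_add_degree, hgd.leadingCoeff_eq, one_mul] at top

end Polynomial

/-- **Existence and uniqueness of the approximate root.**  Let `R` be a commutative ring
in which `d` is invertible, `f` a monic polynomial of degree `n`, and `d` a positive
divisor of `n`.  Then there exists a unique monic polynomial `g` of degree `n / d` such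
that `deg_y (f - g^d) < n - n/d`; this is the `d`-th approximate root of `f`. -/
theorem approximate_root_exists_unique {R : Type*} [CommRing R] (n d : ℕ)
    (hn : 0 < n) (hd : 0 < d) (hdvd : d ∣ n) (hinv : Invertible (d : R))
    (f : R[X]) (hf : f.Monic) (hfdeg : f.natDegree = n) :
    ∃! g : R[X], g.Monic ∧ g.natDegree = n / d ∧
      (f - g ^ d).degree < ((n - n / d : ℕ) : WithBot ℕ) := by
  have : Nontrivial R :=
    nontrivial_iff.mp (nontrivial_of_ne f 0 (ne_zero_of_natDegree_gt (hfdeg ▸ hn)))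
  obtain ⟨e, rfl⟩ : ∃ e, d = e + 1 := ⟨d - 1, by omega⟩
  obtain ⟨m, rfl⟩ := hdvd
  have hunit : IsUnit ((e + 1 : ℕ) : R) := isUnit_of_invertible _
  rw [Nat.mul_div_cancel_left m hd,
    show (e + 1) * m - m = e * m by rw [add_one_mul, Nat.add_sub_cancel]]
  obtain ⟨g, hg, hfg⟩ := IsMonicOfDegree.exists_degree_sub_pow_lt hunit ⟨hfdeg, hf⟩
  refine ⟨g, ⟨hg.monic, hg.natDegree_eq, hfg⟩, fun g' ⟨hg', hg'deg, hfg'⟩ => ?_⟩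
  refine hg.eq_of_degree_pow_sub_pow_lt hunit ⟨hg'deg, hg'⟩ ?_
  rw [← sub_sub_sub_cancel_left _ _ f]
  exact (degree_sub_le _ _).trans_lt (max_lt hfg hfg')
end

section
/- Let K be an algebraically closed field of characteristic zero and let c ∈ K*. The polynomial F = y^n - c·x_1^{α_1}···x_e^{α_e} is irreducible in K[[x_1,...,x_e]][y] if and only if gcd(n, α_1, ..., α_e) = 1. -/
open Polynomial

/-! Write `b ^ n = c`. When `gcd(n, α) = 1`, the substitution `y ↦ b·x^α`, `x_i ↦ x_i^n` kills
`F = y^n - bⁿ x^α`, and its kernel on `K[[x]][y]` is exactly `(F)`: a polynomial of degree `< n`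
in `y` is sent to `∑_j expand(f_j)·bʲ x^{jα}`, whose summands are supported on the pairwise
disjoint classes `n ℕ^e + jα`, `0 ≤ j < n`. The kernel is prime, so `F` is prime. When
`d = gcd(n, α) > 1`, writing `c = bᵈ` gives `F = (y^{n/d})ᵈ - (b x^{α/d})ᵈ`, which has the proper
factor `y^{n/d} - b x^{α/d}`. -/

instance MvPowerSeries.instIsDomain {σ R : Type*} [CommRing R] [IsDomain R] :
    IsDomain (MvPowerSeries σ R) :=
  NoZeroDivisors.to_isDomain _

theorem Finsupp.exists_nsmul_eq_of_forall_dvd {ι : Type*} {d : ℕ} {α : ι →₀ ℕ}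
    (h : ∀ i, d ∣ α i) : ∃ β : ι →₀ ℕ, d • β = α :=
  ⟨α.mapRange (· / d) (Nat.zero_div d), by ext i; simp [Nat.mul_div_cancel' (h i)]⟩

theorem Nat.Coprime.dvd_of_forall_dvd_mul {ι : Type*} {s : Finset ι} {f : ι → ℕ} {n m : ℕ}
    (hn : n.Coprime (s.gcd f)) (h : ∀ i ∈ s, n ∣ m * f i) : n ∣ m := by
  refine hn.dvd_of_dvd_mul_right ?_
  simpa [Finset.gcd_mul_left] using Finset.dvd_gcd h

section Separation

variable {σ : Type*} [Fintype σ] {n : ℕ} {α : σ →₀ ℕ}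

theorem eq_of_nsmul_add_nsmul_eq (hα : n.Coprime (Finset.univ.gcd α)) {j k : ℕ}
    (hj : j < n) (hk : k < n) {d d' : σ →₀ ℕ} (h : n • d + j • α = n • d' + k • α) : j = k := by
  wlog hjk : j ≤ k generalizing j k d d'
  · exact (this hk hj h.symm (le_of_not_ge hjk)).symm
  have hdvd : n ∣ k - j := hα.dvd_of_forall_dvd_mul fun i _ => by
    refine ⟨d i - d' i, ?_⟩
    have hi := congr($h i)
    simp only [Finsupp.add_apply, Finsupp.smul_apply, smul_eq_mul] at hi
    have : j * α i ≤ k * α i := Nat.mul_le_mul_right _ hjk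
    rw [Nat.sub_mul, Nat.mul_sub]
    omega
  have := Nat.eq_zero_of_dvd_of_lt hdvd (by omega)
  omega

variable {R : Type*} [CommRing R]

open MvPowerSeries in
theorem coeff_nsmul_add_nsmul_expand_mul_monomial (hn : n ≠ 0)
    (hα : n.Coprime (Finset.univ.gcd α)) {j k : ℕ} (hj : j < n) (hk : k < n) (d : σ →₀ ℕ)
    (f : MvPowerSeries σ R) (r : R) :
    coeff (n • d + k • α) (expand n hn f * monomial (j • α) r) =
      if j = k then coeff d f * r else 0 := by
  rw [MvPowerSeries.coeff_mul_monomial]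
  split_ifs with hle hjk hjk
  · subst hjk
    rw [add_tsub_cancel_right, coeff_expand_smul]
  · by_contra hne
    obtain ⟨m, -, hm⟩ := support_expand_subset n hn f (left_ne_zero_of_mul hne)
    refine hjk (eq_of_nsmul_add_nsmul_eq hα hj hk (d := m) (d' := d) ?_)
    simp only at hm
    rw [hm, tsub_add_cancel_of_le hle]
  · exact absurd (hjk ▸ le_add_self) hle
  · rfl

theorem eq_zero_of_eval₂_expand_monomial_eq_zero [IsDomain R] (hn : n ≠ 0)
    (hα : n.Coprime (Finset.univ.gcd α)) {b : R} (hb : b ≠ 0) {P : (MvPowerSeries σ R)[X]}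
    (hP : P.natDegree < n)
    (h : P.eval₂ (MvPowerSeries.expand n hn).toRingHom (MvPowerSeries.monomial α b) = 0) :
    P = 0 := by
  ext k d
  rcases lt_or_ge k n with hk | hk
  · have hcoeff : ∑ j ∈ Finset.range n, MvPowerSeries.coeff (n • d + k • α)
        (MvPowerSeries.expand n hn (P.coeff j) * MvPowerSeries.monomial (j • α) (b ^ j)) = 0 := by
      simpa [eval₂_eq_sum_range' _ hP, MvPowerSeries.monomial_pow] using
        congr(MvPowerSeries.coeff (n • d + k • α) $h)
    rw [Finset.sum_congr rfl fun j hj => coeff_nsmul_add_nsmul_expand_mul_monomial hn hα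
      (Finset.mem_range.mp hj) hk d _ _, Finset.sum_ite_eq', if_pos (Finset.mem_range.mpr hk)]
      at hcoeff
    simpa using (mul_eq_zero.mp hcoeff).resolve_right (pow_ne_zero _ hb)
  · simp [coeff_eq_zero_of_natDegree_lt (hP.trans_le hk)]

theorem ker_eval₂_expand_monomial [IsDomain R] (hn : n ≠ 0)
    (hα : n.Coprime (Finset.univ.gcd α)) {b : R} (hb : b ≠ 0) :
    RingHom.ker (eval₂RingHom (MvPowerSeries.expand n hn).toRingHom (MvPowerSeries.monomial α b)) =
      Ideal.span {X ^ n - C (MvPowerSeries.monomial α (b ^ n))} := by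
  set F : (MvPowerSeries σ R)[X] := X ^ n - C (MvPowerSeries.monomial α (b ^ n))
  have hF : F.Monic := monic_X_pow_sub_C _ hn
  have hF_root :
      eval₂ (MvPowerSeries.expand n hn).toRingHom (MvPowerSeries.monomial α b) F = 0 := by
    simp [F, MvPowerSeries.monomial_pow]
  ext P
  rw [RingHom.mem_ker, Ideal.mem_span_singleton, coe_eval₂RingHom]
  constructor
  · intro hP
    rw [← modByMonic_eq_zero_iff_dvd hF]
    refine eq_zero_of_eval₂_expand_monomial_eq_zero hn hα hb ?_ ?_
    · have hdeg : F.natDegree = n := natDegree_X_pow_sub_C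
      exact hdeg ▸ natDegree_modByMonic_lt P hF fun h => hn (by simpa [h] using hdeg.symm)
    · rw [modByMonic_eq_sub_mul_div, eval₂_sub, eval₂_mul, hP, hF_root, zero_mul, sub_zero]
  · rintro ⟨Q, rfl⟩
    rw [eval₂_mul, hF_root, zero_mul]

theorem prime_X_pow_sub_C_monomial_pow [IsDomain R] (hn : n ≠ 0)
    (hα : n.Coprime (Finset.univ.gcd α)) {b : R} (hb : b ≠ 0) :
    Prime (X ^ n - C (MvPowerSeries.monomial α (b ^ n)) : (MvPowerSeries σ R)[X]) := by
  rw [← Ideal.span_singleton_prime (monic_X_pow_sub_C _ hn).ne_zero,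
    ← ker_eval₂_expand_monomial hn hα hb]
  exact RingHom.ker_isPrime _

end Separation

theorem not_irreducible_X_pow_mul_sub_C_pow {A : Type*} [CommRing A] [IsDomain A] {m d : ℕ}
    (hm : m ≠ 0) (hd : 1 < d) (a : A) : ¬ Irreducible (X ^ (m * d) - C (a ^ d) : A[X]) := by
  intro hirr
  have hdvd : X ^ m - C a ∣ X ^ (m * d) - C (a ^ d) := by
    simpa [pow_mul, C_pow] using sub_dvd_pow_sub_pow (X ^ m) (C a) d
  rcases hirr.dvd_iff.mp hdvd with hunit | hassoc
  · have hdeg := natDegree_eq_zero_of_isUnit hunit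
    rw [natDegree_X_pow_sub_C] at hdeg
    exact hm hdeg
  · have hdeg := natDegree_eq_of_degree_eq (degree_eq_degree_of_associated hassoc)
    rw [natDegree_X_pow_sub_C, natDegree_X_pow_sub_C] at hdeg
    exact (Nat.lt_mul_iff_one_lt_right (Nat.pos_of_ne_zero hm)).mpr hd |>.ne' hdeg

theorem not_irreducible_X_pow_sub_C_monomial_pow {σ R : Type*} [CommRing R] [IsDomain R]
    {n d : ℕ} (hn : n ≠ 0) (hd : 1 < d) (hdn : d ∣ n) {α : σ →₀ ℕ} (hdα : ∀ i, d ∣ α i) (b : R) :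
    ¬ Irreducible (X ^ n - C (MvPowerSeries.monomial α (b ^ d)) : (MvPowerSeries σ R)[X]) := by
  obtain ⟨m, rfl⟩ := hdn
  obtain ⟨β, rfl⟩ := Finsupp.exists_nsmul_eq_of_forall_dvd hdα
  rw [mul_comm, ← MvPowerSeries.monomial_pow]
  exact not_irreducible_X_pow_mul_sub_C_pow (right_ne_zero_of_mul hn) hd _

theorem binomial_irreducible_iff_general {K : Type*} [Field K] [IsAlgClosed K]
    (e n : ℕ) (hn : 0 < n) (c : K) (hc : c ≠ 0) (α : Fin e →₀ ℕ) :
    Irreducible ((X : Polynomial (MvPowerSeries (Fin e) K)) ^ n -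
        C ((MvPowerSeries.monomial (R := K) α) c)) ↔
      Nat.gcd n (Finset.univ.gcd fun i : Fin e => α i) = 1 := by
  set d := n.gcd (Finset.univ.gcd fun i : Fin e => α i)
  constructor
  · intro hirr
    by_contra hd_ne_one
    have hd : 1 < d := by
      have : d ≠ 0 := (Nat.gcd_pos_of_pos_left _ hn).ne'
      omega
    have hdα : ∀ i, d ∣ α i := fun i =>
      (Nat.gcd_dvd_right _ _).trans (Finset.gcd_dvd (Finset.mem_univ i))
    obtain ⟨b, rfl⟩ := IsAlgClosed.exists_pow_nat_eq c (Nat.zero_lt_of_lt hd)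
    exact not_irreducible_X_pow_sub_C_monomial_pow hn.ne' hd (Nat.gcd_dvd_left _ _) hdα b hirr
  · intro hd
    obtain ⟨b, rfl⟩ := IsAlgClosed.exists_pow_nat_eq c hn
    exact (prime_X_pow_sub_C_monomial_pow hn.ne' hd (ne_zero_pow hn.ne' hc)).irreducible

/-- Let `K` be an algebraically closed field of characteristic zero and `c ∈ K*`.
The polynomial `F = y^n - c·x_1^{α_1} ⋯ x_e^{α_e}` is irreducible in
`K[[x_1,…,x_e]][y]` if and only if `gcd(n, α_1, …, α_e) = 1`. -/
theorem binomial_irreducible_iff {K : Type*} [Field K] [IsAlgClosed K] [CharZero K]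
    (e n : ℕ) (hn : 0 < n) (c : K) (hc : c ≠ 0) (α : Fin e →₀ ℕ) :
    Irreducible ((X : Polynomial (MvPowerSeries (Fin e) K)) ^ n -
        C ((MvPowerSeries.monomial (R := K) α) c)) ↔
      Nat.gcd n (Finset.univ.gcd fun i : Fin e => α i) = 1 :=
  binomial_irreducible_iff_general e n hn c hc α
end

section
/- Let K be an algebraically closed field of characteristic zero, f ∈ K[[x_1,...,x_e]][y] an irreducible quasi-ordinary polynomial of degree n with characteristic exponents m_1 < ... < m_h. Define lattices M_0 = (nℤ)^e and M_i = (nℤ)^e + Σ_{j≤i} m_j ℤ. Then the product of the indices e_i = [M_i : M_{i-1}] over i = 1,...,h equals n. -/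
open Polynomial

noncomputable section

/-! ### Basic notions for quasi-ordinary polynomials

`K[[x_1,…,x_e]]` is modelled by `MvPowerSeries (Fin e) K`.  Below:
* `expDeg p` is the total degree of an exponent `p`;
* `IsExp u p` says that `p = exp u`, the lexicographically greatest exponent of the
  lowest-degree homogeneous component of `u`;
* `rescalePow n u` is `u(t_1^n, …, t_e^n)`;
* `evalAt n f y` is `f(t_1^n, …, t_e^n, y(t))` for `f ∈ K[[x]][y]`;
* `scaleVars w y` is `y(w_1 t_1, …, w_e t_e)`;
* `polyDisc f` is the `y`-discriminant of `f` (a Sylvester determinant);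
* `IsQuasiOrdinary f` says that this discriminant is a monomial times a unit;
* `IsRootSystem n f y w` records the Abhyankar–Jung factorization
  `f(t_1^n,…,t_e^n,y) = ∏ᵢ (y - y(w^i_1 t_1, …, w^i_e t_e))`;
* `IsCharExponents n h y m` says `m 1 < ⋯ < m h` are the characteristic exponents
  (1-based indexing);
* `Dchar`/`dchar` are the gcd-of-minors sequences `(D_k)`, `(d_k)` and `rchar` is the
  sequence `(r_k)` of semigroup generators. -/

/-- Total degree of an exponent. -/
def expDeg {e : ℕ} (p : Fin e →₀ ℕ) : ℕ := p.sum fun _ k => k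

/-- `p` is `exp u`: `p` lies in the support, has minimal total degree there, and is
lexicographically greatest among the exponents of minimal total degree. -/
def IsExp {e : ℕ} {K : Type*} [Field K] (u : MvPowerSeries (Fin e) K)
    (p : Fin e →₀ ℕ) : Prop :=
  MvPowerSeries.coeff p u ≠ 0 ∧
  (∀ q, MvPowerSeries.coeff q u ≠ 0 → expDeg p ≤ expDeg q) ∧
  (∀ q, MvPowerSeries.coeff q u ≠ 0 → expDeg q = expDeg p → toLex q ≤ toLex p)

/-- The substitution `x_i ↦ t_i^n` on power series. -/
def rescalePow {e : ℕ} {K : Type*} [Field K] (n : ℕ)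
    (u : MvPowerSeries (Fin e) K) : MvPowerSeries (Fin e) K :=
  fun p => if ∀ i, n ∣ p i then
    MvPowerSeries.coeff (Finsupp.mapRange (· / n) (Nat.zero_div n) p) u else 0

/-- `f(t_1^n, …, t_e^n, y)` viewed as a polynomial in `y`. -/
def rescalePoly {e : ℕ} {K : Type*} [Field K] (n : ℕ)
    (f : Polynomial (MvPowerSeries (Fin e) K)) : Polynomial (MvPowerSeries (Fin e) K) :=
  ∑ k ∈ Finset.range (f.natDegree + 1), C (rescalePow n (f.coeff k)) * X ^ k

/-- `f(t_1^n, …, t_e^n, y(t))`. -/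
def evalAt {e : ℕ} {K : Type*} [Field K] (n : ℕ)
    (f : Polynomial (MvPowerSeries (Fin e) K)) (y : MvPowerSeries (Fin e) K) :
    MvPowerSeries (Fin e) K :=
  ∑ k ∈ Finset.range (f.natDegree + 1), rescalePow n (f.coeff k) * y ^ k

/-- `y(w_1 t_1, …, w_e t_e)`. -/
def scaleVars {e : ℕ} {K : Type*} [Field K] (w : Fin e → K)
    (y : MvPowerSeries (Fin e) K) : MvPowerSeries (Fin e) K :=
  fun p => (∏ i, w i ^ p i) * MvPowerSeries.coeff p y

/-- The Sylvester matrix of `f` (of formal degree `n`) and `g` (of formal degree `m`). -/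
def sylvester {R : Type*} [CommRing R] (n m : ℕ) (f g : Polynomial R) :
    Matrix (Fin (n + m)) (Fin (n + m)) R :=
  fun i j =>
    if (i : ℕ) < m then (if (i : ℕ) ≤ (j : ℕ) then f.coeff ((j : ℕ) - (i : ℕ)) else 0)
    else (if (i : ℕ) - m ≤ (j : ℕ) then g.coeff ((j : ℕ) - ((i : ℕ) - m)) else 0)

/-- The `y`-discriminant of `f`, as the resultant of `f` and its derivative. -/
def polyDisc {R : Type*} [CommRing R] (f : Polynomial R) : R :=
  (sylvester f.natDegree (f.natDegree - 1) f f.derivative).det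

/-- `f` is quasi-ordinary: its `y`-discriminant is a monomial times a unit. -/
def IsQuasiOrdinary {e : ℕ} {K : Type*} [Field K]
    (f : Polynomial (MvPowerSeries (Fin e) K)) : Prop :=
  ∃ (N : Fin e →₀ ℕ) (u : MvPowerSeries (Fin e) K), IsUnit u ∧
    polyDisc f = (MvPowerSeries.monomial N) 1 * u

/-- Root system of an irreducible quasi-ordinary polynomial coming from the
Abhyankar–Jung theorem: `f(t_1^n,…,t_e^n,y) = ∏ᵢ (y - y(wⁱ₁ t_1, …, wⁱ_e t_e))`
where the `wⁱ` are `e`-tuples of `n`-th roots of unity giving distinct conjugates. -/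
def IsRootSystem {e : ℕ} {K : Type*} [Field K] (n : ℕ)
    (f : Polynomial (MvPowerSeries (Fin e) K)) (y : MvPowerSeries (Fin e) K)
    (w : Fin n → Fin e → K) : Prop :=
  (∀ i j, (w i j) ^ n = 1) ∧
  Function.Injective (fun i => scaleVars (w i) y) ∧
  rescalePoly n f = ∏ i : Fin n, (X - C (scaleVars (w i) y))

/-- The vector of an exponent, over `ℤ`. -/
def toIntVec {e : ℕ} (p : Fin e →₀ ℕ) : Fin e → ℤ := fun i => (p i : ℤ)

/-- The vector of an exponent, over `ℚ`. -/
def toRatVec {e : ℕ} (p : Fin e →₀ ℕ) : Fin e → ℚ := fun i => (p i : ℚ)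

/-- The lattice `(nℤ)^e + Σ_{q ∈ s} qℤ` inside `ℤ^e`. -/
def latticeOf (e n : ℕ) (s : Set (Fin e →₀ ℕ)) : Submodule ℤ (Fin e → ℤ) :=
  Submodule.span ℤ ((Set.range fun i : Fin e => (n : ℤ) • Pi.single i 1) ∪
    ((fun q : Fin e →₀ ℕ => toIntVec q) '' s))

/-- The lattice `M_k = (nℤ)^e + m_1 ℤ + ⋯ + m_k ℤ` (1-based indexing of `m`). -/
def latticeUpTo {e : ℕ} (n : ℕ) (m : ℕ → (Fin e →₀ ℕ)) (k : ℕ) :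
    Submodule ℤ (Fin e → ℤ) :=
  latticeOf e n {q | ∃ j, 1 ≤ j ∧ j ≤ k ∧ q = m j}

/-- `m 1 < m 2 < ⋯ < m h` is the sequence of characteristic exponents of a root `y`
of an irreducible quasi-ordinary polynomial of degree `n` (1-based indexing):
they increase coordinate-wise, every exponent in the support of `y` lies in the
lattice generated by `(nℤ)^e` and the characteristic exponents of smaller or equal
total degree, each `m i` is not in the lattice generated by the previous ones, and
each `m i` is in the support of `y`. -/
def IsCharExponents {e : ℕ} {K : Type*} [Field K] (n h : ℕ)
    (y : MvPowerSeries (Fin e) K) (m : ℕ → (Fin e →₀ ℕ)) : Prop :=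
  (∀ k l, 1 ≤ k → k < l → l ≤ h → ∀ i, m k i < m l i) ∧
  (∀ p, MvPowerSeries.coeff p y ≠ 0 →
    toIntVec p ∈ latticeOf e n
      {q | ∃ k, 1 ≤ k ∧ k ≤ h ∧ q = m k ∧ expDeg (m k) ≤ expDeg p}) ∧
  (∀ k, 1 ≤ k → k ≤ h → toIntVec (m k) ∉ latticeUpTo n m (k - 1)) ∧
  (∀ k, 1 ≤ k → k ≤ h → MvPowerSeries.coeff (m k) y ≠ 0)

/-- The gcd of all `e × e` minors of a matrix with `e` rows. -/
def gcdMinors {e : ℕ} {c : Type*} [Fintype c] [DecidableEq c]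
    (M : Matrix (Fin e) c ℤ) : ℤ :=
  Finset.gcd (Finset.univ.filter fun g : Fin e → c => Function.Injective g)
    fun g => (M.submatrix id g).det

/-- `D_k`: the gcd of the `e × e` minors of `(n·I_e | m_1ᵀ | ⋯ | m_{k-1}ᵀ)`
(so `D 1 = n^e`). -/
def Dchar (e n : ℕ) (m : ℕ → (Fin e →₀ ℕ)) (k : ℕ) : ℤ :=
  gcdMinors (fun i (j : Fin e ⊕ Fin (k - 1)) =>
    Sum.elim (fun j' : Fin e => if i = j' then (n : ℤ) else 0)
      (fun j' : Fin (k - 1) => ((m ((j' : ℕ) + 1)) i : ℤ)) j)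

/-- The gcd sequence `d_k = D_k / n^{e-1}`; in particular `d 1 = n`. -/
def dchar (e n : ℕ) (m : ℕ → (Fin e →₀ ℕ)) (k : ℕ) : ℕ :=
  (Dchar e n m k).toNat / n ^ (e - 1)

/-- The generators `r_k ∈ ℚ^e`: `r 1 = m 1`, and
`r (k+1) = e_k r_k + m_{k+1} - m_k` with `e_k = d_k / d_{k+1}`. -/
def rchar (e n : ℕ) (m : ℕ → (Fin e →₀ ℕ)) : ℕ → (Fin e → ℚ)
  | 0 => 0
  | 1 => toRatVec (m 1)
  | k + 2 => fun i =>
    ((dchar e n m (k + 1) / dchar e n m (k + 2) : ℕ) : ℚ) * rchar e n m (k + 1) i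
      + (((m (k + 2)) i : ℚ) - ((m (k + 1)) i : ℚ))

/-- The canonical basis `r_0^i = n·e_i` of `(nℤ)^e`, as vectors in `ℚ^e`. -/
def rzero (e n : ℕ) (i : Fin e) : Fin e → ℚ := fun j => if j = i then (n : ℚ) else 0

end

/-!
The group `(μ_n)^e` acts on `K[[t_1, …, t_e]]` by `t_i ↦ ζ_i t_i`. It fixes every series in
`t_1^n, …, t_e^n`, so it permutes the roots of `f(t^n, Y) = ∏ᵢ (Y - wⁱ·y)`; as these roots are
conjugates of `y`, the orbit of `y` is exactly this set of `n` distinct roots, and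
`n^e = n · |Stab y|`. A tuple `ζ` fixes `y` iff the character `v ↦ ∏ ζ_i^{v_i}` of `ℤ^e` is trivial
on the support of `y`, i.e. on `M_h`; by duality of finite abelian groups the stabilizer therefore
has order `[ℤ^e : M_h]`, and the same duality applied to `M_0` gives `[ℤ^e : M_0] = n^e`. Hence
`∏ e_i = [M_h : M_0] = [ℤ^e : M_0] / [ℤ^e : M_h] = n`.
-/

open MulAction

theorem AddSubgroup.prod_Icc_relIndex_eq_relIndex {G : Type*} [AddGroup G]
    {H : ℕ → AddSubgroup G} (hH : Monotone H) (h : ℕ) :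
    ∏ i ∈ Finset.Icc 1 h, (H (i - 1)).relIndex (H i) = (H 0).relIndex (H h) := by
  induction h with
  | zero => simp
  | succ k ih =>
    rw [Finset.prod_Icc_succ_top (by omega), ih, Nat.add_sub_cancel,
      AddSubgroup.relIndex_mul_relIndex _ _ _ (hH k.zero_le) (hH k.le_succ)]

section Characters

variable {M : Type*} [CommMonoid M] {e n : ℕ}

def monomialChar (g : Fin e → Mˣ) : (Fin e → ℤ) →+ Additive Mˣ where
  toFun v := .ofMul (∏ i, g i ^ v i)
  map_zero' := by simp
  map_add' u v := by simp [zpow_add, Finset.prod_mul_distrib]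

@[simp]
lemma toMul_monomialChar (g : Fin e → Mˣ) (v : Fin e → ℤ) :
    (monomialChar g v).toMul = ∏ i, g i ^ v i := rfl

@[simp]
lemma monomialChar_single (g : Fin e → Mˣ) (i : Fin e) :
    monomialChar g (Pi.single i 1) = .ofMul (g i) := by
  simp [monomialChar, Pi.single_apply]

lemma monomialChar_toMul_apply_single (φ : (Fin e → ℤ) →+ Additive Mˣ) :
    monomialChar (fun i => (φ (Pi.single i 1)).toMul) = φ := by
  have : (monomialChar fun i => (φ (Pi.single i 1)).toMul).toIntLinearMap = φ.toIntLinearMap :=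
    (Pi.basisFun ℤ (Fin e)).ext fun i => by simp
  exact AddMonoidHom.ext (LinearMap.congr_fun this)

lemma monomialChar_mul (g g' : Fin e → Mˣ) :
    monomialChar (g * g') = monomialChar g + monomialChar g' :=
  AddMonoidHom.ext fun v => Additive.toMul.injective <| by
    simp only [AddMonoidHom.add_apply, toMul_add, toMul_monomialChar, Pi.mul_apply, mul_zpow,
      Finset.prod_mul_distrib]

variable (n) in
def annihilator (L : AddSubgroup (Fin e → ℤ)) : Subgroup (Fin e → rootsOfUnity n M) where
  carrier := {g | L ≤ (monomialChar fun i => (g i : Mˣ)).ker}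
  one_mem' v _ := Additive.toMul.injective <| by simp
  mul_mem' {g g'} hg hg' v hv := by
    rw [AddMonoidHom.mem_ker,
      show (fun i => ((g * g') i : Mˣ)) = (fun i => (g i : Mˣ)) * fun i => (g' i : Mˣ) from rfl,
      monomialChar_mul, AddMonoidHom.add_apply, AddMonoidHom.mem_ker.mp (hg hv),
      AddMonoidHom.mem_ker.mp (hg' hv), add_zero]
  inv_mem' {g} hg v hv := Additive.toMul.injective <| by
    have := congrArg Additive.toMul (hg hv)
    simp only [toMul_monomialChar, toMul_zero] at this ⊢
    simp [inv_zpow', zpow_neg, Finset.prod_inv_distrib, this]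

variable {L : AddSubgroup (Fin e → ℤ)}

lemma mem_annihilator {g : Fin e → rootsOfUnity n M} :
    g ∈ annihilator n L ↔ L ≤ (monomialChar fun i => (g i : Mˣ)).ker :=
  Iff.rfl

def annihilatorEquivDual (hL : ∀ v, n • v ∈ L) :
    annihilator (M := M) n L ≃ ((Fin e → ℤ) ⧸ L →+ Additive Mˣ) where
  toFun g :=
    QuotientAddGroup.lift L (monomialChar fun i => (g.1 i : Mˣ)) (mem_annihilator.mp g.2)
  invFun φ := ⟨fun i => ⟨(φ (Pi.single i 1 : Fin e → ℤ)).toMul, by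
      rw [mem_rootsOfUnity, ← toMul_nsmul, ← map_nsmul, ← QuotientAddGroup.mk_nsmul,
        (QuotientAddGroup.eq_zero_iff _).mpr (hL _), map_zero, toMul_zero]⟩,
    mem_annihilator.mpr fun v hv => by
      change v ∈ (monomialChar fun i => (φ.comp (QuotientAddGroup.mk' L) (Pi.single i 1)).toMul).ker
      rw [monomialChar_toMul_apply_single, AddMonoidHom.mem_ker, AddMonoidHom.comp_apply,
        QuotientAddGroup.mk'_apply, (QuotientAddGroup.eq_zero_iff _).mpr hv, map_zero]⟩
  left_inv g := by
    ext i
    dsimp only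
    rw [QuotientAddGroup.lift_mk, monomialChar_single, toMul_ofMul]
  right_inv φ := QuotientAddGroup.addMonoidHom_ext _ <|
    monomialChar_toMul_apply_single (φ.comp (QuotientAddGroup.mk' L))

lemma finite_quotient_of_nsmul_mem {A : Type*} [AddCommGroup A] [AddGroup.FG A] [NeZero n]
    {L : AddSubgroup A} (hL : ∀ v, n • v ∈ L) : Finite (A ⧸ L) :=
  AddCommGroup.finite_of_fg_isAddTorsion _ fun x => by
    induction x using QuotientAddGroup.induction_on with
    | H v =>
      exact isOfFinAddOrder_iff_nsmul_eq_zero.mpr ⟨n, NeZero.pos n,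
        by rw [← QuotientAddGroup.mk_nsmul, QuotientAddGroup.eq_zero_iff]; exact hL v⟩

theorem card_annihilator [NeZero n] [HasEnoughRootsOfUnity M n] (hL : ∀ v, n • v ∈ L) :
    Nat.card (annihilator (M := M) n L) = L.index := by
  have := finite_quotient_of_nsmul_mem hL
  have : HasEnoughRootsOfUnity M (Monoid.exponent (Multiplicative ((Fin e → ℤ) ⧸ L))) :=
    HasEnoughRootsOfUnity.of_dvd M <| Monoid.exponent_dvd_of_forall_pow_eq_one fun x => by
      induction x using Multiplicative.rec with
      | ofAdd q =>
        induction q using QuotientAddGroup.induction_on with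
        | H v => rw [← ofAdd_nsmul, ← QuotientAddGroup.mk_nsmul,
            (QuotientAddGroup.eq_zero_iff _).mpr (hL v), ofAdd_zero]
  rw [Nat.card_congr ((annihilatorEquivDual hL).trans AddMonoidHom.toMultiplicativeLeft),
    CommGroup.card_monoidHom_of_hasEnoughRootsOfUnity, AddSubgroup.index_eq_card]
  rfl

lemma natCard_pi_rootsOfUnity [NeZero n] [HasEnoughRootsOfUnity M n] :
    Nat.card (Fin e → rootsOfUnity n M) = n ^ e := by
  rw [Nat.card_pi, Finset.prod_const, HasEnoughRootsOfUnity.natCard_rootsOfUnity,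
    Finset.card_univ, Fintype.card_fin]

end Characters

section Lattices

variable {M : Type*} [CommMonoid M] {e n : ℕ}

lemma nsmul_mem_latticeOf (s : Set (Fin e →₀ ℕ)) (v : Fin e → ℤ) : n • v ∈ latticeOf e n s := by
  induction v using Pi.single_induction with
  | zero => simp
  | add u v hu hv => simpa [smul_add] using add_mem hu hv
  | single i k =>
    rw [show n • Pi.single i k = k • ((n : ℤ) • Pi.single i 1 : Fin e → ℤ) by
      ext j; by_cases hj : j = i <;> simp [hj, mul_comm]]
    exact Submodule.smul_mem _ _ (Submodule.subset_span (Or.inl ⟨i, rfl⟩))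

lemma latticeOf_mono {s t : Set (Fin e →₀ ℕ)} (hst : s ⊆ t) : latticeOf e n s ≤ latticeOf e n t :=
  Submodule.span_mono (Set.union_subset_union_right _ (Set.image_mono hst))

lemma monotone_latticeUpTo (m : ℕ → (Fin e →₀ ℕ)) : Monotone (latticeUpTo n m) :=
  fun _ _ hkl => latticeOf_mono fun _ ⟨j, h1, h2, h3⟩ => ⟨j, h1, h2.trans hkl, h3⟩

lemma monomialChar_toIntVec_eq_zero_iff (g : Fin e → Mˣ) (p : Fin e →₀ ℕ) :
    monomialChar g (toIntVec p) = 0 ↔ ∏ i, (g i : M) ^ p i = 1 := by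
  rw [← toMul_eq_one, toMul_monomialChar, ← Units.val_eq_one]
  simp [toIntVec]

lemma mem_annihilator_latticeOf {g : Fin e → rootsOfUnity n M}
    {s : Set (Fin e →₀ ℕ)} : g ∈ annihilator n (latticeOf e n s).toAddSubgroup ↔
      ∀ q ∈ s, ∏ i, ((g i : Mˣ) : M) ^ q i = 1 := by
  rw [mem_annihilator]
  change Submodule.span ℤ _ ≤ LinearMap.ker (monomialChar fun i => (g i : Mˣ)).toIntLinearMap ↔ _
  rw [Submodule.span_le, Set.union_subset_iff, Set.range_subset_iff, and_iff_right fun i => ?_]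
  · rw [Set.image_subset_iff]
    simp only [Set.subset_def, Set.mem_preimage, SetLike.mem_coe,
      LinearMap.mem_ker, AddMonoidHom.coe_toIntLinearMap, monomialChar_toIntVec_eq_zero_iff]
  · rw [SetLike.mem_coe, LinearMap.mem_ker, AddMonoidHom.coe_toIntLinearMap, map_zsmul,
      monomialChar_single, ← ofMul_zpow, zpow_natCast, (mem_rootsOfUnity n _).mp (g i).2,
      ofMul_one]

lemma annihilator_latticeUpTo_zero (m : ℕ → (Fin e →₀ ℕ)) :
    annihilator (M := M) n (latticeUpTo n m 0).toAddSubgroup = ⊤ :=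
  eq_top_iff.mpr fun _ _ => mem_annihilator_latticeOf.mpr fun _ ⟨_, h1, h0, _⟩ =>
    absurd (h1.trans h0) (by omega)

variable {K : Type*} [Field K]

lemma latticeOf_support_eq_latticeUpTo {h : ℕ} {m : ℕ → (Fin e →₀ ℕ)}
    {y : MvPowerSeries (Fin e) K}
    (hsupp : ∀ p, MvPowerSeries.coeff p y ≠ 0 → toIntVec p ∈
      latticeOf e n {q | ∃ k, 1 ≤ k ∧ k ≤ h ∧ q = m k ∧ expDeg (m k) ≤ expDeg p})
    (hmem : ∀ k, 1 ≤ k → k ≤ h → MvPowerSeries.coeff (m k) y ≠ 0) :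
    latticeOf e n {p | MvPowerSeries.coeff p y ≠ 0} = latticeUpTo n m h := by
  apply le_antisymm
  · refine Submodule.span_le.mpr
      (Set.union_subset (fun _ hv => Submodule.subset_span (Or.inl hv)) ?_)
    rintro _ ⟨p, hp, rfl⟩
    refine latticeOf_mono ?_ (hsupp p hp)
    rintro _ ⟨k, hk1, hkh, rfl, -⟩
    exact ⟨k, hk1, hkh, rfl⟩
  · refine latticeOf_mono ?_
    rintro _ ⟨k, hk1, hkh, rfl⟩
    exact hmem k hk1 hkh

end Lattices

noncomputable section Scaling

variable {K : Type*} [Field K] {e n : ℕ}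

lemma coeff_scaleVars (w : Fin e → K) (y : MvPowerSeries (Fin e) K) (p : Fin e →₀ ℕ) :
    MvPowerSeries.coeff p (scaleVars w y) = (∏ i, w i ^ p i) * MvPowerSeries.coeff p y :=
  rfl

lemma scaleVars_one (y : MvPowerSeries (Fin e) K) : scaleVars 1 y = y := by
  ext p
  simp [coeff_scaleVars]

lemma scaleVars_mul (w w' : Fin e → K) (y : MvPowerSeries (Fin e) K) :
    scaleVars (w * w') y = scaleVars w (scaleVars w' y) := by
  ext p
  simp only [coeff_scaleVars, Pi.mul_apply, mul_pow, Finset.prod_mul_distrib, mul_assoc]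

def scaleVarsRingHom (w : Fin e → K) : MvPowerSeries (Fin e) K →+* MvPowerSeries (Fin e) K where
  toFun := scaleVars w
  map_one' := by
    ext p
    rcases eq_or_ne p 0 with rfl | hp
    · simp [coeff_scaleVars]
    · simp [coeff_scaleVars, MvPowerSeries.coeff_one, hp]
  map_mul' u v := by
    ext p
    simp only [coeff_scaleVars, MvPowerSeries.coeff_mul, Finset.mul_sum]
    refine Finset.sum_congr rfl fun q hq => ?_
    rw [← Finset.HasAntidiagonal.mem_antidiagonal.mp hq]
    simp only [Finsupp.add_apply, pow_add, Finset.prod_mul_distrib]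
    ring
  map_zero' := by
    ext p
    simp [coeff_scaleVars]
  map_add' u v := by
    ext p
    simp [coeff_scaleVars, mul_add]

end Scaling

noncomputable abbrev rootsOfUnityScaling {K : Type*} [Field K] {e n : ℕ} :
    MulSemiringAction (Fin e → rootsOfUnity n K) (MvPowerSeries (Fin e) K) where
  smul g := scaleVarsRingHom fun i => ((g i : Kˣ) : K)
  one_smul := scaleVars_one
  mul_smul g g' := scaleVars_mul (fun i => ((g i : Kˣ) : K)) fun i => ((g' i : Kˣ) : K)
  smul_zero _ := map_zero _
  smul_add _ := map_add _
  smul_one _ := map_one _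
  smul_mul _ := map_mul _

attribute [local instance] rootsOfUnityScaling

section Action

variable {K : Type*} [Field K] {e n : ℕ}

lemma smul_eq_scaleVars (g : Fin e → rootsOfUnity n K) (y : MvPowerSeries (Fin e) K) :
    g • y = scaleVars (fun i => ((g i : Kˣ) : K)) y :=
  rfl

lemma smul_rescalePow (g : Fin e → rootsOfUnity n K) (u : MvPowerSeries (Fin e) K) :
    g • rescalePow n u = rescalePow n u := by
  ext p
  rw [smul_eq_scaleVars, coeff_scaleVars]
  by_cases hp : ∀ i, n ∣ p i
  · convert one_mul _
    refine Finset.prod_eq_one fun i _ => ?_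
    obtain ⟨c, hc⟩ := hp i
    rw [hc, pow_mul, ← Units.val_pow_eq_pow_val, (mem_rootsOfUnity n _).mp (g i).2,
      Units.val_one, one_pow]
  · simp [rescalePow, MvPowerSeries.coeff_apply, hp]

lemma smul_rescalePoly (g : Fin e → rootsOfUnity n K) (f : (MvPowerSeries (Fin e) K)[X]) :
    g • rescalePoly n f = rescalePoly n f := by
  simp only [rescalePoly, Finset.smul_sum, smul_mul', smul_C, smul_pow', smul_X, smul_rescalePow]

lemma isRoot_rescalePoly_smul {f : (MvPowerSeries (Fin e) K)[X]} {z : MvPowerSeries (Fin e) K}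
    (hz : (rescalePoly n f).IsRoot z) (g : Fin e → rootsOfUnity n K) :
    (rescalePoly n f).IsRoot (g • z) := by
  rw [IsRoot, ← smul_rescalePoly g, smul_eval_smul, hz.eq_zero, smul_zero]

lemma stabilizer_eq_annihilator (y : MvPowerSeries (Fin e) K) :
    stabilizer (Fin e → rootsOfUnity n K) y =
      annihilator n (latticeOf e n {p | MvPowerSeries.coeff p y ≠ 0}).toAddSubgroup := by
  ext g
  rw [mem_stabilizer_iff, mem_annihilator_latticeOf, smul_eq_scaleVars]
  constructor
  · intro hg p hp
    have := congrArg (MvPowerSeries.coeff p) hg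
    rw [coeff_scaleVars] at this
    exact mul_eq_right₀ hp |>.mp this
  · intro hg
    ext p
    rw [coeff_scaleVars]
    by_cases hp : MvPowerSeries.coeff p y = 0
    · rw [hp, mul_zero]
    · rw [hg p hp, one_mul]

variable [NeZero n]

lemma orbit_eq_range_of_isRootSystem {f : (MvPowerSeries (Fin e) K)[X]}
    {y : MvPowerSeries (Fin e) K} {w : Fin n → Fin e → K} (hroot : IsRootSystem n f y w) :
    orbit (Fin e → rootsOfUnity n K) y = Set.range fun i => scaleVars (w i) y := by
  obtain ⟨hw, -, hfac⟩ := hroot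
  have isRoot_iff z : (rescalePoly n f).IsRoot z ↔ ∃ i, scaleVars (w i) y = z := by
    rw [IsRoot.def, hfac, eval_prod, Finset.prod_eq_zero_iff]
    simp only [Finset.mem_univ, true_and, eval_sub, eval_X, eval_C, sub_eq_zero, eq_comm]
  let ρ i : Fin e → rootsOfUnity n K := fun j => rootsOfUnity.mkOfPowEq (w i j) (hw i j)
  have hρ i : ρ i • y = scaleVars (w i) y := by
    simp [ρ, smul_eq_scaleVars]
  apply subset_antisymm
  · rintro _ ⟨g, rfl⟩
    -- `y` itself need not be a root, but `ρ 0 • y` is, and `g • y = (g * (ρ 0)⁻¹) • (ρ 0 • y)`.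
    have : (rescalePoly n f).IsRoot (ρ 0 • y) := (isRoot_iff _).mpr ⟨0, (hρ 0).symm⟩
    simpa [smul_smul] using (isRoot_iff _).mp (isRoot_rescalePoly_smul this (g * (ρ 0)⁻¹))
  · rintro _ ⟨i, rfl⟩
    exact ⟨ρ i, hρ i⟩

lemma ncard_orbit_of_isRootSystem {f : (MvPowerSeries (Fin e) K)[X]}
    {y : MvPowerSeries (Fin e) K} {w : Fin n → Fin e → K} (hroot : IsRootSystem n f y w) :
    (orbit (Fin e → rootsOfUnity n K) y).ncard = n := by
  rw [orbit_eq_range_of_isRootSystem hroot, Set.ncard_range_of_injective hroot.2.1, Nat.card_fin]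

end Action

open Polynomial in
theorem prod_lattice_indices_eq_degree_general {K : Type*} [Field K] [IsAlgClosed K] [CharZero K]
    (e n h : ℕ) (hn : 0 < n) (f : Polynomial (MvPowerSeries (Fin e) K))
    (y : MvPowerSeries (Fin e) K) (w : Fin n → Fin e → K)
    (hroot : IsRootSystem n f y w) (m : ℕ → (Fin e →₀ ℕ))
    (hchar : IsCharExponents n h y m) :
    ∏ i ∈ Finset.Icc 1 h,
      ((latticeUpTo n m (i - 1)).toAddSubgroup.addSubgroupOf
        (latticeUpTo n m i).toAddSubgroup).index = n := by
  obtain ⟨-, hsupp, -, hmem⟩ := hchar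
  have : NeZero n := ⟨hn.ne'⟩
  have : NeZero (n : K) := ⟨Nat.cast_ne_zero.mpr hn.ne'⟩
  have hM0 : (latticeUpTo n m 0).toAddSubgroup.index = n ^ e := by
    rw [← card_annihilator (M := K) (nsmul_mem_latticeOf _), annihilator_latticeUpTo_zero,
      Subgroup.card_top, natCard_pi_rootsOfUnity]
  have hMh : n * (latticeUpTo n m h).toAddSubgroup.index = n ^ e := by
    calc n * _ = (stabilizer (Fin e → rootsOfUnity n K) y).index *
          Nat.card (stabilizer (Fin e → rootsOfUnity n K) y) := by
          rw [index_stabilizer, ncard_orbit_of_isRootSystem hroot, stabilizer_eq_annihilator,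
            latticeOf_support_eq_latticeUpTo hsupp hmem, card_annihilator (nsmul_mem_latticeOf _)]
      _ = n ^ e := by rw [Subgroup.index_mul_card, natCard_pi_rootsOfUnity]
  have hMh_ne : (latticeUpTo n m h).toAddSubgroup.index ≠ 0 := fun h0 =>
    pow_ne_zero e hn.ne' (by simpa [h0] using hMh.symm)
  have hmono : Monotone fun k => (latticeUpTo n m k).toAddSubgroup :=
    fun _ _ hkl => monotone_latticeUpTo m hkl
  refine (AddSubgroup.prod_Icc_relIndex_eq_relIndex hmono h).trans
    (Nat.eq_of_mul_eq_mul_right (Nat.pos_of_ne_zero hMh_ne) ?_)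
  rw [AddSubgroup.relIndex_mul_index (hmono h.zero_le), hM0, hMh]

open Polynomial in
/-- For an irreducible quasi-ordinary polynomial `f` of degree `n` with characteristic
exponents `m 1 < ⋯ < m h` and lattices `M_i = (nℤ)^e + Σ_{j≤i} m_j ℤ`, the product of
the indices `e_i = [M_i : M_{i-1}]`, `i = 1, …, h`, equals `n`. -/
theorem prod_lattice_indices_eq_degree {K : Type*} [Field K] [IsAlgClosed K] [CharZero K]
    (e n h : ℕ) (hn : 0 < n) (f : Polynomial (MvPowerSeries (Fin e) K))
    (hmonic : f.Monic) (hdeg : f.natDegree = n) (hirr : Irreducible f)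
    (hqo : IsQuasiOrdinary f) (y : MvPowerSeries (Fin e) K) (w : Fin n → Fin e → K)
    (hroot : IsRootSystem n f y w) (m : ℕ → (Fin e →₀ ℕ))
    (hchar : IsCharExponents n h y m) :
    ∏ i ∈ Finset.Icc 1 h,
      ((latticeUpTo n m (i - 1)).toAddSubgroup.addSubgroupOf
        (latticeUpTo n m i).toAddSubgroup).index = n :=
  prod_lattice_indices_eq_degree_general e n h hn f y w hroot m hchar
end
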